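/- For every integer p ≥ 1 and all real (v,u): ∂²θ_{1,p}/∂u² = e^u·∂θ_{1,p−1}/∂v, ∂²θ_{1,p}/∂u∂v = ∂θ_{1,p−1}/∂u, and ∂²θ_{1,p}/∂v² = ∂θ_{1,p−1}/∂v, i.e. the functions θ_{1,p} satisfy the deformed flatness recursion ∂²θ_{1,p}/∂w^β∂w^γ = c^ξ_{βγ}·∂θ_{1,p−1}/∂w^ξ determined by the Frobenius potential F = (1/2)v²u + e^u. -/

import Mathlib

/-!
The dispersionless Hamiltonian densities `θ_{α,p}(v,u)` of the extended Toda
hierarchy and their partial derivatives.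
-/

noncomputable section Toda

/-- The harmonic number `H_m = Σ_{j=1}^m 1/j`. -/
def harm (m : ℕ) : ℝ := ∑ j ∈ Finset.Icc 1 m, (1 : ℝ) / (j : ℝ)

/-- `θ_{2,p}(v,u) = Σ_{2m ≤ p+1} e^{mu} v^{p+1−2m} / ((m!)² (p+1−2m)!)`. -/
def theta2 (p : ℕ) (v u : ℝ) : ℝ :=
  ∑ m ∈ Finset.range ((p + 1) / 2 + 1),
    Real.exp (m * u) * v ^ (p + 1 - 2 * m) /
      ((Nat.factorial m : ℝ) ^ 2 * (Nat.factorial (p + 1 - 2 * m) : ℝ))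

/-- `θ_{1,p}(v,u) = −2 Σ_{2m ≤ p} (H_m − u/2) e^{mu} v^{p−2m} / ((m!)² (p−2m)!)`. -/
def theta1 (p : ℕ) (v u : ℝ) : ℝ :=
  -2 * ∑ m ∈ Finset.range (p / 2 + 1),
    (harm m - u / 2) * Real.exp (m * u) * v ^ (p - 2 * m) /
      ((Nat.factorial m : ℝ) ^ 2 * (Nat.factorial (p - 2 * m) : ℝ))

/-- Partial derivative in the first variable `v`. -/
def dv (f : ℝ → ℝ → ℝ) (v u : ℝ) : ℝ := deriv (fun v' => f v' u) v

/-- Partial derivative in the second variable `u`. -/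
def du (f : ℝ → ℝ → ℝ) (v u : ℝ) : ℝ := deriv (fun u' => f v u') u

/-!
Write `θ_{1,p} = −2 Σ_{2m+n=p} a_m(u) b_n(v)` with `a_m(u) = (H_m − u/2) e^{mu}/(m!)²` and
`b_n(v) = v^n/n!`. Then `b_n' = b_{n−1}` and `a_m'' = e^u a_{m−1}` (with `b_0' = a_0'' = 0`), so
`∂_v` lowers `p` by one, while `∂_u²` lowers it by two and multiplies by `e^u`.
-/

open Finset

section EvenConv

variable {R : Type*} [Semiring R]

/-- `evenConv a b p = Σ_{2m + n = p} a m * b n`. -/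
def evenConv (a b : ℕ → R) (p : ℕ) : R :=
  ∑ m ∈ range (p / 2 + 1), a m * b (p - 2 * m)

lemma evenConv_of_lt_two (a b : ℕ → R) {p : ℕ} (hp : p < 2) : evenConv a b p = a 0 * b p := by
  simp [evenConv, Nat.div_eq_of_lt hp]

lemma evenConv_succ_of_shift (a : ℕ → R) {b b' : ℕ → R} (h0 : b' 0 = 0)
    (hsucc : ∀ n, b' (n + 1) = b n) (p : ℕ) : evenConv a b' (p + 1) = evenConv a b p := by
  unfold evenConv
  symm
  refine sum_subset_zero_on_sdiff (range_subset_range.2 (by omega)) ?_ ?_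
  · intro m hm
    simp only [mem_sdiff, mem_range] at hm
    rw [show p + 1 - 2 * m = 0 by omega, h0, mul_zero]
  · intro m hm
    rw [mem_range] at hm
    rw [show p + 1 - 2 * m = (p - 2 * m) + 1 by omega, hsucc]

lemma evenConv_add_two_of_shift {a a' : ℕ → R} (b : ℕ → R) {c : R} (h0 : a' 0 = 0)
    (hsucc : ∀ m, a' (m + 1) = c * a m) (p : ℕ) :
    evenConv a' b (p + 2) = c * evenConv a b p := by
  unfold evenConv
  rw [show (p + 2) / 2 + 1 = p / 2 + 1 + 1 by omega, sum_range_succ', h0, zero_mul, add_zero,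
    mul_sum]
  refine sum_congr rfl fun m _ => ?_
  rw [hsucc, show p + 2 - 2 * (m + 1) = p - 2 * m by omega, mul_assoc]

end EvenConv

section HasDerivAt

variable {𝕜 : Type*} [NontriviallyNormedField 𝕜] {x : 𝕜}

lemma hasDerivAt_evenConv_left {a a' : ℕ → 𝕜 → 𝕜} (b : ℕ → 𝕜)
    (ha : ∀ m, HasDerivAt (a m) (a' m x) x) (p : ℕ) :
    HasDerivAt (fun y => evenConv (fun m => a m y) b p) (evenConv (fun m => a' m x) b p) x := by
  unfold evenConv
  exact HasDerivAt.fun_sum fun m _ => (ha m).mul_const _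

lemma hasDerivAt_evenConv_right (a : ℕ → 𝕜) {b b' : ℕ → 𝕜 → 𝕜}
    (hb : ∀ n, HasDerivAt (b n) (b' n x) x) (p : ℕ) :
    HasDerivAt (fun y => evenConv a (fun n => b n y) p) (evenConv a (fun n => b' n x) p) x := by
  unfold evenConv
  exact HasDerivAt.fun_sum fun m _ => (hb _).const_mul _

end HasDerivAt

def theta1Coeff (m : ℕ) (u : ℝ) : ℝ :=
  (harm m - u / 2) * Real.exp (m * u) / (m.factorial : ℝ) ^ 2

def theta1CoeffDeriv (m : ℕ) (u : ℝ) : ℝ :=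
  (m * (harm m - u / 2) - 1 / 2) * Real.exp (m * u) / (m.factorial : ℝ) ^ 2

def powDivFactorial (n : ℕ) (v : ℝ) : ℝ := v ^ n / n.factorial

lemma harm_succ (m : ℕ) : harm (m + 1) = harm m + 1 / (m + 1) := by
  rw [harm, sum_Icc_succ_top (by omega), ← harm]
  push_cast
  rfl

lemma theta1_eq_evenConv (p : ℕ) (v u : ℝ) :
    theta1 p v u = -2 * evenConv (fun m => theta1Coeff m u) (fun n => powDivFactorial n v) p := by
  unfold theta1 evenConv theta1Coeff powDivFactorial
  simp only [mul_div_mul_comm]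

lemma hasDerivAt_powDivFactorial_zero (v : ℝ) : HasDerivAt (powDivFactorial 0) 0 v := by
  rw [show powDivFactorial 0 = fun _ => 1 from funext fun _ => by simp [powDivFactorial]]
  exact hasDerivAt_const v 1

lemma hasDerivAt_powDivFactorial_succ (n : ℕ) (v : ℝ) :
    HasDerivAt (powDivFactorial (n + 1)) (powDivFactorial n v) v := by
  refine ((hasDerivAt_pow (n + 1) v).div_const _).congr_deriv ?_
  rw [powDivFactorial, Nat.factorial_succ, Nat.add_sub_cancel]
  push_cast
  field_simp

lemma hasDerivAt_theta1Coeff (m : ℕ) (u : ℝ) :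
    HasDerivAt (theta1Coeff m) (theta1CoeffDeriv m u) u := by
  have hlin : HasDerivAt (fun u' : ℝ => harm m - u' / 2) (-(1 / 2)) u := by
    simpa using ((hasDerivAt_id u).div_const 2).const_sub (harm m)
  have hexp : HasDerivAt (fun u' : ℝ => Real.exp (m * u')) (Real.exp (m * u) * m) u := by
    simpa using ((hasDerivAt_id u).const_mul (m : ℝ)).exp
  refine ((hlin.mul hexp).div_const _).congr_deriv ?_
  rw [theta1CoeffDeriv]
  ring

lemma hasDerivAt_theta1CoeffDeriv_zero (u : ℝ) : HasDerivAt (theta1CoeffDeriv 0) 0 u := by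
  rw [show theta1CoeffDeriv 0 = fun _ => -(1 / 2) from funext fun _ => by simp [theta1CoeffDeriv]]
  exact hasDerivAt_const u _

lemma hasDerivAt_theta1CoeffDeriv_succ (m : ℕ) (u : ℝ) :
    HasDerivAt (theta1CoeffDeriv (m + 1)) (Real.exp u * theta1Coeff m u) u := by
  have hlin : HasDerivAt (fun u' : ℝ => (m + 1 : ℕ) * (harm (m + 1) - u' / 2) - 1 / 2)
      (-((m + 1 : ℕ) / 2)) u :=
    (((hasDerivAt_id u).div_const 2).const_sub _).const_mul _ |>.sub_const _
      |>.congr_deriv (by ring)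
  have hexp : HasDerivAt (fun u' : ℝ => Real.exp ((m + 1 : ℕ) * u'))
      (Real.exp ((m + 1 : ℕ) * u) * (m + 1 : ℕ)) u := by
    simpa using ((hasDerivAt_id u).const_mul ((m + 1 : ℕ) : ℝ)).exp
  refine ((hlin.mul hexp).div_const _).congr_deriv ?_
  rw [theta1Coeff, harm_succ, Nat.factorial_succ]
  push_cast
  rw [add_mul, one_mul, Real.exp_add]
  field_simp
  ring

lemma dv_theta1 (p : ℕ) (v u : ℝ) :
    dv (theta1 p) v u = -2 * evenConv (fun m => theta1Coeff m u)
      (fun n => deriv (powDivFactorial n) v) p := by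
  have hb (n : ℕ) : HasDerivAt (powDivFactorial n) (deriv (powDivFactorial n) v) v := by
    cases n with
    | zero => exact (hasDerivAt_powDivFactorial_zero v).differentiableAt.hasDerivAt
    | succ n => exact (hasDerivAt_powDivFactorial_succ n v).differentiableAt.hasDerivAt
  simp only [dv, theta1_eq_evenConv]
  exact ((hasDerivAt_evenConv_right _ hb p).const_mul (-2)).deriv

lemma dv_theta1_zero (v u : ℝ) : dv (theta1 0) v u = 0 := by
  rw [dv_theta1, evenConv_of_lt_two _ _ (by norm_num), (hasDerivAt_powDivFactorial_zero v).deriv,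
    mul_zero, mul_zero]

lemma dv_theta1_succ (p : ℕ) : dv (theta1 (p + 1)) = theta1 p := by
  ext v u
  rw [dv_theta1, theta1_eq_evenConv, evenConv_succ_of_shift _
    (hasDerivAt_powDivFactorial_zero v).deriv fun n => (hasDerivAt_powDivFactorial_succ n v).deriv]

lemma du_theta1 (p : ℕ) :
    du (theta1 p) = fun v u =>
      -2 * evenConv (fun m => theta1CoeffDeriv m u) (fun n => powDivFactorial n v) p := by
  ext v u
  simp only [du, theta1_eq_evenConv]
  exact ((hasDerivAt_evenConv_left _ (fun m => hasDerivAt_theta1Coeff m u) p).const_mul _).deriv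

lemma du_du_theta1 (p : ℕ) (v u : ℝ) :
    du (du (theta1 p)) v u = -2 * evenConv (fun m => deriv (theta1CoeffDeriv m) u)
      (fun n => powDivFactorial n v) p := by
  have ha (m : ℕ) : HasDerivAt (theta1CoeffDeriv m) (deriv (theta1CoeffDeriv m) u) u := by
    cases m with
    | zero => exact (hasDerivAt_theta1CoeffDeriv_zero u).differentiableAt.hasDerivAt
    | succ m => exact (hasDerivAt_theta1CoeffDeriv_succ m u).differentiableAt.hasDerivAt
  rw [du, du_theta1]
  exact ((hasDerivAt_evenConv_left _ ha p).const_mul _).deriv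

lemma du_du_theta1_succ (p : ℕ) (v u : ℝ) :
    du (du (theta1 (p + 1))) v u = Real.exp u * dv (theta1 p) v u := by
  have h0 := (hasDerivAt_theta1CoeffDeriv_zero u).deriv
  rw [du_du_theta1]
  cases p with
  | zero => rw [dv_theta1_zero, evenConv_of_lt_two _ _ (by norm_num), h0]; ring
  | succ p =>
    rw [dv_theta1_succ, theta1_eq_evenConv, evenConv_add_two_of_shift _ h0
      fun m => (hasDerivAt_theta1CoeffDeriv_succ m u).deriv]
    ring

/-- The deformed flatness recursion for the functions `θ_{1,p}`, `p ≥ 1`: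
`∂²θ_{1,p}/∂u² = e^u ∂θ_{1,p−1}/∂v`, `∂²θ_{1,p}/∂u∂v = ∂θ_{1,p−1}/∂u`,
`∂²θ_{1,p}/∂v² = ∂θ_{1,p−1}/∂v`. -/
theorem theta1_deformed_flatness (p : ℕ) (hp : 1 ≤ p) (v u : ℝ) :
    du (du (theta1 p)) v u = Real.exp u * dv (theta1 (p - 1)) v u ∧
    du (dv (theta1 p)) v u = du (theta1 (p - 1)) v u ∧
    dv (dv (theta1 p)) v u = dv (theta1 (p - 1)) v u := by
  obtain ⟨q, rfl⟩ : ∃ q, p = q + 1 := ⟨p - 1, by omega⟩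
  rw [Nat.add_sub_cancel, dv_theta1_succ]
  exact ⟨du_du_theta1_succ q v u, rfl, rfl⟩

end Toda
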